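/- Suppose inf_{x∈ℝⁿ} f(x) > −∞ and let {x^k}, {y^k} be a GPPA sequence. If along a subsequence {k_ℓ} one has x^{k_ℓ} → x* and y^{k_ℓ} → y* as ℓ → +∞, then g₁(x^{k_ℓ+1}) → g₁(x*); in particular x* ∈ dom g₁. -/

import Mathlib

/-!
Testing the prox step at `z = x^k` and combining it with the descent lemma for `g₂` and the
subgradient inequality for `h` gives sufficient decrease,
`f(x^{k+1}) + (t - L)/2 ‖x^{k+1} - x^k‖² ≤ f(x^k)`. Since `f` is bounded below, the steps
`‖x^{k+1} - x^k‖` tend to `0`, hence `x^{k_ℓ+1} → x*` as well.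

Testing the prox step at an arbitrary `z` gives
`g₁(x^{k+1}) ≤ g₁(z) + ⟪y^k - ∇g₂(x^k), x^{k+1} - z⟫ + t/2 (‖z - x^k‖² - ‖x^{k+1} - x^k‖²)`.
For `z = x*` the error term vanishes along the subsequence, so `limsup g₁(x^{k_ℓ+1}) ≤ g₁(x*)`,
while lower semicontinuity gives `g₁(x*) ≤ liminf`. For `z = x⁰` the same inequality bounds
`g₁(x*)` by a finite number.
-/

open scoped RealInnerProductSpace
open Filter Topology

theorem tendsto_zero_of_add_mul_le {F d : ℕ → ℝ} {c : ℝ} (hc : 0 < c)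
    (hF : BddBelow (Set.range F)) (hdec : ∀ k, F (k + 1) + c * d k ≤ F k) (hd : ∀ k, 0 ≤ d k) :
    Tendsto d atTop (𝓝 0) := by
  have hanti : Antitone F := antitone_nat_of_succ_le fun k => by nlinarith [hdec k, hd k]
  have hlim := tendsto_atTop_ciInf hanti hF
  have hgap : Tendsto (fun k => (F k - F (k + 1)) / c) atTop (𝓝 0) := by
    simpa using (hlim.sub (hlim.comp (tendsto_add_atTop_nat 1))).div_const c
  refine squeeze_zero hd (fun k => ?_) hgap
  rw [le_div_iff₀ hc]
  linarith [hdec k]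

theorem EReal.tendsto_zero_of_add_coe_mul_le {F : ℕ → EReal} {d : ℕ → ℝ} {c : ℝ} {m : EReal}
    (hc : 0 < c) (hF₀ : F 0 ≠ ⊤) (hm : m ≠ ⊥) (hmF : ∀ k, m ≤ F k)
    (hdec : ∀ k, F (k + 1) + (c * d k : ℝ) ≤ F k) (hd : ∀ k, 0 ≤ d k) :
    Tendsto d atTop (𝓝 0) := by
  have hanti : Antitone F := antitone_nat_of_succ_le fun k =>
    (le_add_of_nonneg_right (EReal.coe_nonneg.2 (mul_nonneg hc.le (hd k)))).trans (hdec k)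
  have hreal : ∀ k, ((F k).toReal : EReal) = F k := fun k =>
    EReal.coe_toReal (ne_top_of_le_ne_top hF₀ (hanti (Nat.zero_le k)))
      (ne_bot_of_le_ne_bot hm (hmF k))
  refine tendsto_zero_of_add_mul_le (F := fun k => (F k).toReal) hc ⟨m.toReal, ?_⟩ (fun k => ?_)
    hd
  · rintro _ ⟨k, rfl⟩
    exact EReal.toReal_le_toReal (hmF k) hm (hreal k ▸ EReal.coe_ne_top _)
  · have := hdec k
    rw [← hreal k, ← hreal (k + 1)] at this
    exact_mod_cast this

theorem EReal.tendsto_const_add_coe {α : Type*} {l : Filter α} (b : EReal) {e : α → ℝ} {r : ℝ}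
    (he : Tendsto e l (𝓝 r)) : Tendsto (fun i => b + e i) l (𝓝 (b + r)) :=
  (EReal.continuousAt_add (Or.inr (EReal.coe_ne_bot r)) (Or.inr (EReal.coe_ne_top r))).tendsto
    |>.comp (tendsto_const_nhds.prodMk_nhds (EReal.tendsto_coe.2 he))

theorem LowerSemicontinuousAt.tendsto_of_le_add_coe {X α : Type*} [TopologicalSpace X]
    {l : Filter α} [l.NeBot] {g : X → EReal} {a : X} {u : α → X} {e : α → ℝ}
    (hg : LowerSemicontinuousAt g a) (hu : Tendsto u l (𝓝 a)) (he : Tendsto e l (𝓝 0))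
    (hle : ∀ i, g (u i) ≤ g a + e i) : Tendsto (fun i => g (u i)) l (𝓝 (g a)) := by
  refine tendsto_of_le_liminf_of_limsup_le ?_ ?_
  · exact hg.le_liminf.trans hu.liminf_le_liminf_comp
  · calc limsup (fun i => g (u i)) l ≤ limsup (fun i => g a + e i) l :=
          limsup_le_limsup (Eventually.of_forall hle)
      _ = g a := by simpa using (EReal.tendsto_const_add_coe (g a) he).limsup_eq

theorem EReal.sub_coe_eq_add_coe_neg (a : EReal) (p : ℝ) : a - p = a + (-p : ℝ) := by
  rw [sub_eq_add_neg, EReal.coe_neg]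

theorem EReal.add_coe_add_coe (a : EReal) (p q : ℝ) : a + p + q = a + (p + q : ℝ) := by
  rw [add_assoc, EReal.coe_add]

theorem EReal.le_add_coe_sub_of_add_coe_le {a b : EReal} {p q : ℝ} (h : a + p ≤ b + q) :
    a ≤ b + (q - p : ℝ) :=
  calc a = a + p - p := EReal.add_sub_cancel_right.symm
    _ ≤ b + q - p := EReal.sub_le_sub h le_rfl
    _ = b + (q - p : ℝ) := by
      rw [EReal.sub_coe_eq_add_coe_neg, EReal.add_coe_add_coe, ← sub_eq_add_neg]

theorem tendsto_comp_add_one_of_sq_norm_sub {E : Type*} [NormedAddCommGroup E] {x : ℕ → E}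
    {φ : ℕ → ℕ} {a : E}
    (hx : Tendsto (fun k => ‖x (k + 1) - x k‖ ^ 2) atTop (𝓝 0)) (hφ : Tendsto φ atTop atTop)
    (hxφ : Tendsto (fun l => x (φ l)) atTop (𝓝 a)) :
    Tendsto (fun l => x (φ l + 1)) atTop (𝓝 a) := by
  have hnorm : Tendsto (fun k => ‖x (k + 1) - x k‖) atTop (𝓝 0) := by
    simpa using hx.sqrt
  simpa using hxφ.add ((tendsto_zero_iff_norm_tendsto_zero.2 hnorm).comp hφ)

section InnerProductSpace

variable {E : Type*} [NormedAddCommGroup E] [InnerProductSpace ℝ E]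

theorem le_add_inner_of_forall_prox_le {g : E → EReal} {w x x' : E} {t : ℝ}
    (hmin : ∀ z, g x' - (⟪w, x' - x⟫ : ℝ) + (t / 2 * ‖x' - x‖ ^ 2 : ℝ)
      ≤ g z - (⟪w, z - x⟫ : ℝ) + (t / 2 * ‖z - x‖ ^ 2 : ℝ)) (z : E) :
    g x' ≤ g z + (⟪w, x' - z⟫ + t / 2 * (‖z - x‖ ^ 2 - ‖x' - x‖ ^ 2) : ℝ) := by
  have h := hmin z
  simp only [EReal.sub_coe_eq_add_coe_neg, EReal.add_coe_add_coe] at h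
  refine (EReal.le_add_coe_sub_of_add_coe_le h).trans_eq ?_
  congr 2
  rw [show x' - z = (x' - x) - (z - x) by abel, inner_sub_right w (x' - x) (z - x)]
  ring

theorem sufficient_decrease_of_prox_step {g₁ : E → EReal} {g₂ h : E → ℝ} {g₂' : E → E} {L t : ℝ}
    {x x' y : E}
    (hprox : g₁ x' ≤ g₁ x + (⟪y - g₂' x, x' - x⟫ - t / 2 * ‖x' - x‖ ^ 2 : ℝ))
    (hg₂ : g₂ x' ≤ g₂ x + ⟪g₂' x, x' - x⟫ + L / 2 * ‖x' - x‖ ^ 2)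
    (hy : ⟪y, x' - x⟫ ≤ h x' - h x) :
    g₁ x' + (g₂ x' : EReal) - (h x' : EReal) + ((t - L) / 2 * ‖x' - x‖ ^ 2 : ℝ)
      ≤ g₁ x + (g₂ x : EReal) - (h x : EReal) := by
  simp only [EReal.sub_coe_eq_add_coe_neg, EReal.add_coe_add_coe]
  calc _ ≤ g₁ x + (⟪y - g₂' x, x' - x⟫ - t / 2 * ‖x' - x‖ ^ 2 : ℝ)
        + (g₂ x' + -h x' + (t - L) / 2 * ‖x' - x‖ ^ 2 : ℝ) := by gcongr
    _ ≤ g₁ x + (g₂ x + -h x : ℝ) := by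
      rw [EReal.add_coe_add_coe]
      refine add_le_add le_rfl (EReal.coe_le_coe_iff.2 ?_)
      rw [inner_sub_left]
      linarith

variable [CompleteSpace E]

theorem le_add_inner_add_of_lipschitzWith_gradient {f : E → ℝ} {f' : E → E} {L : ℝ}
    (hL : 0 ≤ L) (hf : ∀ z, HasGradientAt f (f' z) z) (hlip : LipschitzWith L.toNNReal f')
    (a b : E) :
    f b ≤ f a + ⟪f' a, b - a⟫ + L / 2 * ‖b - a‖ ^ 2 := by
  set v := b - a
  have hline : ∀ s : ℝ, HasDerivAt (fun s : ℝ => f (a + s • v)) ⟪f' (a + s • v), v⟫ s := by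
    intro s
    have := (hf (a + s • v)).hasFDerivAt.comp_hasDerivAt s
      (((hasDerivAt_id s).smul_const v).const_add a)
    simpa [InnerProductSpace.toDual_apply_apply, Function.comp_def] using this
  have hslope : ∀ s, 0 ≤ s → ⟪f' (a + s • v), v⟫ ≤ ⟪f' a, v⟫ + L * s * ‖v‖ ^ 2 := by
    intro s hs
    have hdist : ‖f' (a + s • v) - f' a‖ ≤ L * (s * ‖v‖) := by
      simpa [← dist_eq_norm, norm_smul, abs_of_nonneg hs, Real.coe_toNNReal L hL]
        using hlip.dist_le_mul (a + s • v) a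
    calc ⟪f' (a + s • v), v⟫ = ⟪f' a, v⟫ + ⟪f' (a + s • v) - f' a, v⟫ := by
          rw [inner_sub_left]; ring
      _ ≤ ⟪f' a, v⟫ + ‖f' (a + s • v) - f' a‖ * ‖v‖ := by gcongr; exact real_inner_le_norm _ _
      _ ≤ ⟪f' a, v⟫ + L * (s * ‖v‖) * ‖v‖ := by gcongr
      _ = ⟪f' a, v⟫ + L * s * ‖v‖ ^ 2 := by ring
  -- the gap between the quadratic upper model and `f` along the segment is monotone
  have hgap : ∀ s : ℝ,
      HasDerivAt (fun s => s * ⟪f' a, v⟫ + L / 2 * s ^ 2 * ‖v‖ ^ 2 - f (a + s • v))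
      (⟪f' a, v⟫ + L * s * ‖v‖ ^ 2 - ⟪f' (a + s • v), v⟫) s := by
    intro s
    refine ((((hasDerivAt_id s).mul_const _).add
      (((hasDerivAt_pow 2 s).const_mul (L / 2)).mul_const _)).sub (hline s)).congr_deriv ?_
    push_cast; ring
  have hmono := monotoneOn_of_hasDerivWithinAt_nonneg (convex_Ici (0 : ℝ))
    (fun s _ => (hgap s).continuousAt.continuousWithinAt) (fun s _ => (hgap s).hasDerivWithinAt)
    (fun s hs => by
      rw [interior_Ici] at hs
      linarith [hslope s (le_of_lt hs)])
    (Set.mem_Ici.mpr le_rfl) (Set.mem_Ici.mpr zero_le_one) zero_le_one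
  simp only [zero_mul, ne_eq, OfNat.ofNat_ne_zero, not_false_eq_true, zero_pow, mul_zero, add_zero,
    zero_smul, zero_sub, one_mul, one_pow, mul_one, one_smul, add_sub_cancel, neg_le_sub_iff_le_add,
    v] at hmono
  linarith

end InnerProductSpace

theorem stmt_4_general {n : ℕ}
    (g₁ : EuclideanSpace ℝ (Fin n) → EReal)
    (g₂ h : EuclideanSpace ℝ (Fin n) → ℝ)
    (g₂' : EuclideanSpace ℝ (Fin n) → EuclideanSpace ℝ (Fin n))
    (L t : ℝ) (hL : 0 ≤ L) (ht : L < t)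
    (hlsc : LowerSemicontinuous g₁)
    (hgrad : ∀ z, HasGradientAt g₂ (g₂' z) z)
    (hlip : LipschitzWith L.toNNReal g₂')
    (f : EuclideanSpace ℝ (Fin n) → EReal)
    (hf : ∀ z, f z = g₁ z + ((g₂ z : ℝ) : EReal) - ((h z : ℝ) : EReal))
    (hbdd : (⨅ z, f z) ≠ ⊥)
    (x y : ℕ → EuclideanSpace ℝ (Fin n))
    (hdom : ∀ k, g₁ (x k) ≠ ⊤)
    (hy : ∀ k z, ⟪y k, z - x k⟫ ≤ h z - h (x k))
    (hmin : ∀ k z,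
      g₁ (x (k+1)) - ((⟪y k - g₂' (x k), x (k+1) - x k⟫ : ℝ) : EReal)
        + ((t/2 * ‖x (k+1) - x k‖^2 : ℝ) : EReal)
      ≤ g₁ z - ((⟪y k - g₂' (x k), z - x k⟫ : ℝ) : EReal)
        + ((t/2 * ‖z - x k‖^2 : ℝ) : EReal))
    (φ : ℕ → ℕ) (hφ : StrictMono φ)
    (xstar ystar : EuclideanSpace ℝ (Fin n))
    (hxconv : Tendsto (fun l => x (φ l)) atTop (𝓝 xstar))
    (hyconv : Tendsto (fun l => y (φ l)) atTop (𝓝 ystar)) :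
    Tendsto (fun l => g₁ (x (φ l + 1))) atTop (𝓝 (g₁ xstar)) ∧ g₁ xstar ≠ ⊤ := by
  have hprox := fun k => le_add_inner_of_forall_prox_le (hmin k)
  have hdecrease : ∀ k, f (x (k + 1)) + ((t - L) / 2 * ‖x (k + 1) - x k‖ ^ 2 : ℝ) ≤ f (x k) := by
    intro k
    rw [hf, hf]
    refine sufficient_decrease_of_prox_step ((hprox k (x k)).trans_eq ?_)
      (le_add_inner_add_of_lipschitzWith_gradient hL hgrad hlip _ _) (hy k _)
    rw [sub_self, norm_zero]
    ring_nf
  have hf₀ : f (x 0) ≠ ⊤ := by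
    rw [hf, EReal.sub_coe_eq_add_coe_neg]
    exact EReal.add_ne_top (EReal.add_ne_top (hdom 0) (EReal.coe_ne_top _)) (EReal.coe_ne_top _)
  have hstep : Tendsto (fun k => ‖x (k + 1) - x k‖ ^ 2) atTop (𝓝 0) :=
    EReal.tendsto_zero_of_add_coe_mul_le (by linarith) hf₀ hbdd (fun k => iInf_le f (x k))
      hdecrease (fun k => sq_nonneg _)
  have hnext := tendsto_comp_add_one_of_sq_norm_sub hstep hφ.tendsto_atTop hxconv
  have hdefect : ∀ z, Tendsto (fun l => ⟪y (φ l) - g₂' (x (φ l)), x (φ l + 1) - z⟫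
      + t / 2 * (‖z - x (φ l)‖ ^ 2 - ‖x (φ l + 1) - x (φ l)‖ ^ 2)) atTop
      (𝓝 (⟪ystar - g₂' xstar, xstar - z⟫ + t / 2 * (‖z - xstar‖ ^ 2 - 0))) := fun z =>
    ((hyconv.sub ((hlip.continuous.tendsto xstar).comp hxconv)).inner (hnext.sub_const z)).add
      ((((hxconv.const_sub z).norm.pow 2).sub (hstep.comp hφ.tendsto_atTop)).const_mul (t / 2))
  have hconv : Tendsto (fun l => g₁ (x (φ l + 1))) atTop (𝓝 (g₁ xstar)) :=
    (hlsc.lowerSemicontinuousAt xstar).tendsto_of_le_add_coe hnext (by simpa using hdefect xstar)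
      fun l => hprox _ _
  refine ⟨hconv, ne_top_of_le_ne_top (EReal.add_ne_top (hdom 0) (EReal.coe_ne_top _))
    (le_of_tendsto_of_tendsto' hconv (EReal.tendsto_const_add_coe _ (hdefect (x 0)))
      fun l => hprox _ _)⟩

/-- If `inf f > −∞` and along a subsequence `x^{k_ℓ} → x*`, `y^{k_ℓ} → y*`, then
`g₁(x^{k_ℓ+1}) → g₁(x*)`; in particular `x* ∈ dom g₁`. Here `f = g₁ + g₂ − h`. -/
theorem stmt_4 {n : ℕ}
    (g₁ : EuclideanSpace ℝ (Fin n) → EReal)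
    (g₂ h : EuclideanSpace ℝ (Fin n) → ℝ)
    (g₂' : EuclideanSpace ℝ (Fin n) → EuclideanSpace ℝ (Fin n))
    (L t : ℝ) (hL : 0 ≤ L) (ht : L < t)
    (hproper : ∃ z, g₁ z ≠ ⊤) (hnotbot : ∀ z, g₁ z ≠ ⊥)
    (hlsc : LowerSemicontinuous g₁)
    (hgrad : ∀ z, HasGradientAt g₂ (g₂' z) z)
    (hlip : LipschitzWith L.toNNReal g₂')
    (hconv : ConvexOn ℝ Set.univ h)
    (f : EuclideanSpace ℝ (Fin n) → EReal)
    (hf : ∀ z, f z = g₁ z + ((g₂ z : ℝ) : EReal) - ((h z : ℝ) : EReal))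
    (hbdd : (⨅ z, f z) ≠ ⊥)
    (x y : ℕ → EuclideanSpace ℝ (Fin n))
    (hdom : ∀ k, g₁ (x k) ≠ ⊤)
    (hy : ∀ k z, ⟪y k, z - x k⟫ ≤ h z - h (x k))
    (hmin : ∀ k z,
      g₁ (x (k+1)) - ((⟪y k - g₂' (x k), x (k+1) - x k⟫ : ℝ) : EReal)
        + ((t/2 * ‖x (k+1) - x k‖^2 : ℝ) : EReal)
      ≤ g₁ z - ((⟪y k - g₂' (x k), z - x k⟫ : ℝ) : EReal)
        + ((t/2 * ‖z - x k‖^2 : ℝ) : EReal))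
    (φ : ℕ → ℕ) (hφ : StrictMono φ)
    (xstar ystar : EuclideanSpace ℝ (Fin n))
    (hxconv : Tendsto (fun l => x (φ l)) atTop (𝓝 xstar))
    (hyconv : Tendsto (fun l => y (φ l)) atTop (𝓝 ystar)) :
    Tendsto (fun l => g₁ (x (φ l + 1))) atTop (𝓝 (g₁ xstar)) ∧ g₁ xstar ≠ ⊤ :=
  stmt_4_general g₁ g₂ h g₂' L t hL ht hlsc hgrad hlip f hf hbdd x y hdom hy hmin φ hφ xstar ystar
    hxconv hyconv
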